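/- arXiv:2109.06844 — 4 statements merged into one kernel-verified Lean document; each statement's English description precedes it below -/
import Mathlib

section
/- For every x ∈ [0,1), the limit as n → ∞ of ( (1/n) ∑_{i=0}^{n-1} fract(2^i x) − p_n(x)/n ) equals 0. -/
open Filter

lemma digit_sum_telescope (x : ℝ) (hx0 : ⌊x⌋ = 0) (n : ℕ) :
    (∑ j ∈ Finset.Icc 1 n, (⌊(2 : ℝ) ^ j * x⌋ - 2 * ⌊(2 : ℝ) ^ (j - 1) * x⌋) : ℤ)
      = ⌊(2 : ℝ) ^ n * x⌋ - ∑ i ∈ Finset.range n, ⌊(2 : ℝ) ^ i * x⌋ := by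
  induction n with
  | zero => simpa using hx0.symm
  | succ n ih =>
      rw [Finset.sum_Icc_succ_top (Nat.one_le_iff_ne_zero.mpr (Nat.succ_ne_zero n)),
        ih, Finset.sum_range_succ]
      simp only [Nat.add_sub_cancel]
      ring

/-- For every `x ∈ [0,1)`,
`(1/n) ∑_{i=0}^{n-1} fract (2^i x) - p_n(x)/n → 0` as `n → ∞`, where
`p_n(x) = ∑_{j=1}^n d_j(x)` and `d_j(x) = ⌊2^j x⌋ - 2 * ⌊2^{j-1} x⌋` is the j-th binary digit. -/
theorem fract_sum_sub_digitSum_div_tendsto_zero (x : ℝ) (hx : x ∈ Set.Ico (0 : ℝ) 1) :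
    Tendsto (fun n : ℕ =>
      (1 / (n : ℝ)) * ∑ i ∈ Finset.range n, Int.fract ((2 : ℝ) ^ i * x)
        - ((∑ j ∈ Finset.Icc 1 n, (⌊(2 : ℝ) ^ j * x⌋ - 2 * ⌊(2 : ℝ) ^ (j - 1) * x⌋) : ℤ) : ℝ)
            / (n : ℝ))
      atTop (nhds 0) := by
  obtain ⟨hx0, hx1⟩ := hx
  have hfl : ⌊x⌋ = 0 := Int.floor_eq_zero_iff.mpr ⟨hx0, hx1⟩
  have key : ∀ n : ℕ, 1 ≤ n →
      (1 / (n : ℝ)) * ∑ i ∈ Finset.range n, Int.fract ((2 : ℝ) ^ i * x)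
        - ((∑ j ∈ Finset.Icc 1 n, (⌊(2 : ℝ) ^ j * x⌋ - 2 * ⌊(2 : ℝ) ^ (j - 1) * x⌋) : ℤ) : ℝ)
            / (n : ℝ)
      = Int.fract ((2 : ℝ) ^ n * x) / n - x / n := by
    intro n hn
    have hn' : (n : ℝ) ≠ 0 := Nat.cast_ne_zero.mpr (by omega)
    rw [digit_sum_telescope x hfl n]
    have hsum : ∑ i ∈ Finset.range n, Int.fract ((2 : ℝ) ^ i * x)
        = ((2 : ℝ) ^ n - 1) * x - ∑ i ∈ Finset.range n, (⌊(2 : ℝ) ^ i * x⌋ : ℝ) := by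
      have h1 : ∀ i ∈ Finset.range n, Int.fract ((2 : ℝ) ^ i * x)
          = (2 : ℝ) ^ i * x - (⌊(2 : ℝ) ^ i * x⌋ : ℝ) := fun i _ => rfl
      rw [Finset.sum_congr rfl h1, Finset.sum_sub_distrib]
      congr 1
      rw [← Finset.sum_mul, geom_sum_eq (by norm_num : (2:ℝ) ≠ 1)]
      ring
    have hf : Int.fract ((2:ℝ)^n*x) = 2^n*x - (⌊(2:ℝ)^n*x⌋:ℝ) := rfl
    rw [hsum, hf]
    push_cast
    field_simp
    ring
  have ha : Tendsto (fun n : ℕ => Int.fract ((2 : ℝ) ^ n * x) / n) atTop (nhds 0) := by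
    apply squeeze_zero (fun n => div_nonneg (Int.fract_nonneg _) (Nat.cast_nonneg n))
      (g := fun n : ℕ => 1 / (n : ℝ)) ?_ tendsto_one_div_atTop_nhds_zero_nat
    intro n
    rcases Nat.eq_zero_or_pos n with h | h
    · simp [h]
    · have hnr : (0:ℝ) < n := by exact_mod_cast h
      exact div_le_div_of_nonneg_right (Int.fract_lt_one _).le hnr.le
  have hb : Tendsto (fun n : ℕ => x / n) atTop (nhds 0) :=
    tendsto_const_div_atTop_nhds_zero_nat x
  have h1 : Tendsto (fun n : ℕ => Int.fract ((2 : ℝ) ^ n * x) / n - x / n)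
      atTop (nhds 0) := by simpa using ha.sub hb
  exact h1.congr' (by filter_upwards [eventually_ge_atTop 1] with n hn using (key n hn).symm)
end

section
/- For the standard number system in ℝ² with A = [[2,1],[0,2]] and D = {(0,0), (3,0), (0,1), (3,1)}, the set Δ = { ∑_{i=0}^ℓ A^i e_i : ℓ ∈ ℕ, e_i ∈ D − D } is NOT an additive subgroup of ℤ² (i.e., Δ is not a lattice). -/
private lemma Apow_form (i : ℕ) : ∃ c : ℤ,
    (!![2, 1; 0, 2] : Matrix (Fin 2) (Fin 2) ℤ) ^ i = !![2 ^ i, c; 0, 2 ^ i] := by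
  induction i with
  | zero => exact ⟨0, by simp [Matrix.one_fin_two]⟩
  | succ n ih =>
    obtain ⟨c, hc⟩ := ih
    refine ⟨2 ^ n + c * 2, ?_⟩
    rw [pow_succ, hc, Matrix.mul_fin_two]
    norm_num [pow_succ]

private lemma mulVec_apply2 (M : Matrix (Fin 2) (Fin 2) ℤ) (v : Fin 2 → ℤ) (k : Fin 2) :
    M.mulVec v k = M k 0 * v 0 + M k 1 * v 1 := by
  simp [Matrix.mulVec, dotProduct, Fin.sum_univ_two]

private lemma binary_zero : ∀ (n : ℕ) (y : ℕ → ℤ),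
    (∀ i, y i = -1 ∨ y i = 0 ∨ y i = 1) →
    (∑ i ∈ Finset.range n, 2 ^ i * y i) = 0 → ∀ i < n, y i = 0 := by
  intro n
  induction n with
  | zero => intro y _ _ i hi; omega
  | succ m ih =>
    intro y hy hsum i hi
    rw [Finset.sum_range_succ'] at hsum
    have h2 : ∑ i ∈ Finset.range m, 2 ^ (i + 1) * y (i + 1)
        = 2 * ∑ i ∈ Finset.range m, 2 ^ i * y (i + 1) := by
      rw [Finset.mul_sum]; apply Finset.sum_congr rfl; intro j _; ring
    rw [h2] at hsum
    have hy0 : y 0 = 0 := by rcases hy 0 with h | h | h <;> omega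
    have hS : ∑ i ∈ Finset.range m, 2 ^ i * y (i + 1) = 0 := by
      simp only [pow_zero, one_mul] at hsum; omega
    have := ih (fun j => y (j + 1)) (fun j => hy (j + 1)) hS
    rcases Nat.eq_zero_or_pos i with rfl | hpos
    · exact hy0
    · obtain ⟨j, rfl⟩ := Nat.exists_eq_add_of_lt hpos
      simp only [Nat.zero_add] at *
      exact this j (by omega)

/-- For the standard number system with `A = [[2,1],[0,2]]` and
`D = {(0,0), (3,0), (0,1), (3,1)}`, the set `Δ = { ∑_{i=0}^ℓ A^i e_i : e_i ∈ D - D }`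
is NOT an additive subgroup of `ℤ²`. -/
theorem delta_not_lattice_LagariasWang (A : Matrix (Fin 2) (Fin 2) ℤ)
    (hA : A = !![2, 1; 0, 2])
    (D : Set (Fin 2 → ℤ))
    (hD : D = {![0, 0], ![3, 0], ![0, 1], ![3, 1]})
    (Δ : Set (Fin 2 → ℤ))
    (hΔ : Δ = {z | ∃ ℓ : ℕ, ∃ e : ℕ → (Fin 2 → ℤ),
      (∀ i, ∃ a ∈ D, ∃ b ∈ D, e i = a - b) ∧
      z = ∑ i ∈ Finset.range (ℓ + 1), (A ^ i).mulVec (e i)}) :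
    ¬ ∃ G : AddSubgroup (Fin 2 → ℤ), (G : Set (Fin 2 → ℤ)) = Δ := by
  rintro ⟨G, hG⟩
  subst hA hD hΔ
  -- membership of ![0,1]
  have hm1 : (![0, 1] : Fin 2 → ℤ) ∈ (G : Set (Fin 2 → ℤ)) := by
    rw [hG]
    refine ⟨0, fun _ => ![0, 1],
      fun i => ⟨![0, 1], by simp, ![0, 0], by simp, by ext j; fin_cases j <;> simp⟩, ?_⟩
    rw [Finset.sum_range_one, pow_zero, Matrix.one_mulVec]
  -- membership of ![-1,-1]
  have hm2 : (![-1, -1] : Fin 2 → ℤ) ∈ (G : Set (Fin 2 → ℤ)) := by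
    rw [hG]
    refine ⟨1, fun i => if i = 1 then ![0, -1] else ![0, 1], fun i => ?_, ?_⟩
    · by_cases h : i = 1
      · exact ⟨![0, 0], by simp, ![0, 1], by simp,
          by simp only [h, if_pos]; ext j; fin_cases j <;> simp⟩
      · exact ⟨![0, 1], by simp, ![0, 0], by simp,
          by simp only [h, if_neg, if_false]; ext j; fin_cases j <;> simp⟩
    · rw [Finset.sum_range_succ, Finset.sum_range_one]
      simp only [pow_zero, pow_one, Matrix.one_mulVec, if_pos, if_neg]
      norm_num
      constructor <;>
        simp [Matrix.mulVec, dotProduct, Fin.sum_univ_two, Matrix.vecHead, Matrix.vecTail]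
  -- so the sum ![-1,0] is in Δ
  have hm3 : (![-1, 0] : Fin 2 → ℤ) ∈ (G : Set (Fin 2 → ℤ)) := by
    have hadd := G.add_mem hm1 hm2
    have he : (![0, 1] : Fin 2 → ℤ) + ![-1, -1] = ![-1, 0] := by
      ext j; fin_cases j <;> norm_num
    rwa [he] at hadd
  rw [hG] at hm3
  obtain ⟨ℓ, e, hdig, hsum⟩ := hm3
  -- digit bounds
  have hx : ∀ i, (e i 0 = -3 ∨ e i 0 = 0 ∨ e i 0 = 3) ∧
      (e i 1 = -1 ∨ e i 1 = 0 ∨ e i 1 = 1) := by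
    intro i
    obtain ⟨a, ha, b, hb, hab⟩ := hdig i
    have h0 : e i 0 = a 0 - b 0 := by rw [hab]; rfl
    have h1 : e i 1 = a 1 - b 1 := by rw [hab]; rfl
    simp only [Set.mem_insert_iff, Set.mem_singleton_iff] at ha hb
    rcases ha with rfl | rfl | rfl | rfl <;> rcases hb with rfl | rfl | rfl | rfl <;>
      rw [h0, h1] at * <;> norm_num
  -- power formula
  choose c hc using Apow_form
  have hcoord1 : ∀ i, (((!![2, 1; 0, 2] : Matrix (Fin 2) (Fin 2) ℤ) ^ i).mulVec (e i)) 1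
      = 2 ^ i * e i 1 := by
    intro i
    rw [hc i, mulVec_apply2]
    simp
  have hs1 : (0 : ℤ) = ∑ i ∈ Finset.range (ℓ + 1), 2 ^ i * e i 1 := by
    have h := congrFun hsum 1
    rw [Finset.sum_apply] at h
    simp only [hcoord1] at h
    simpa using h
  have hy0 : ∀ i < ℓ + 1, e i 1 = 0 :=
    binary_zero (ℓ + 1) (fun i => e i 1) (fun i => (hx i).2) hs1.symm
  -- first coordinate
  have hcoord0 : ∀ i ∈ Finset.range (ℓ + 1),
      (((!![2, 1; 0, 2] : Matrix (Fin 2) (Fin 2) ℤ) ^ i).mulVec (e i)) 0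
      = 2 ^ i * e i 0 := by
    intro i hi
    rw [hc i, mulVec_apply2]
    have h1 := hy0 i (Finset.mem_range.mp hi)
    simp [h1]
  have hs0 : (-1 : ℤ) = ∑ i ∈ Finset.range (ℓ + 1), 2 ^ i * e i 0 := by
    have h := congrFun hsum 0
    rw [Finset.sum_apply] at h
    rw [Finset.sum_congr rfl hcoord0] at h
    simpa using h
  have hdvd : (3 : ℤ) ∣ ∑ i ∈ Finset.range (ℓ + 1), 2 ^ i * e i 0 := by
    apply Finset.dvd_sum
    intro i _
    rcases (hx i).1 with h | h | h <;> rw [h] <;>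
      exact Dvd.dvd.mul_left (by norm_num) _
  rw [← hs0] at hdvd
  omega
end

section
/- For the standard number system in ℝ² with A = [[-1,1],[-1,-1]] and D = {(0,0), (1,0)}, the set Δ = { ∑_{i=0}^ℓ A^i e_i : ℓ ∈ ℕ, e_i ∈ {(0,0), (1,0), (−1,0)} } equals all of ℤ². Consequently the difference set of integer parts of this number system is the full lattice ℤ². -/
open Matrix

private def Amat : Matrix (Fin 2) (Fin 2) ℤ := !![-1, 1; -1, -1]

private def Dig : Set (Fin 2 → ℤ) := {0, ![1, 0], -![1, 0]}

private def S : Set (Fin 2 → ℤ) :=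
  {z | ∃ ℓ : ℕ, ∃ e : ℕ → (Fin 2 → ℤ),
    (∀ i, e i ∈ Dig) ∧
    z = ∑ i ∈ Finset.range (ℓ + 1), (Amat ^ i).mulVec (e i)}

private lemma mulVec_sum (M : Matrix (Fin 2) (Fin 2) ℤ) (s : Finset ℕ) (f : ℕ → Fin 2 → ℤ) :
    M.mulVec (∑ i ∈ s, f i) = ∑ i ∈ s, M.mulVec (f i) :=
  map_sum (Matrix.mulVecLin M) f s

private lemma zero_mem_S : (0 : Fin 2 → ℤ) ∈ S := by
  refine ⟨0, fun _ => 0, fun i => Or.inl rfl, ?_⟩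
  simp

private lemma step_S {z d : Fin 2 → ℤ} (hd : d ∈ Dig) (hz : z ∈ S) :
    Amat.mulVec z + d ∈ S := by
  obtain ⟨ℓ, e, he, hsum⟩ := hz
  refine ⟨ℓ + 1, fun i => if i = 0 then d else e (i - 1), ?_, ?_⟩
  · intro i
    by_cases h : i = 0 <;> simp [h, he, hd]
  · rw [Finset.sum_range_succ', hsum, mulVec_sum]
    congr 1
    · refine Finset.sum_congr rfl fun i _ => ?_
      simp only [Nat.succ_ne_zero, if_false, Nat.add_sub_cancel, Nat.add_eq_zero, and_false,
        one_ne_zero, ite_false]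
      rw [pow_succ', Matrix.mulVec_mulVec]
    · simp

private lemma build {z w d : Fin 2 → ℤ} (hd : d ∈ Dig) (hw : w ∈ S)
    (hz : z = Amat.mulVec w + d) : z ∈ S := hz ▸ step_S hd hw

private lemma mulVec_Amat (w : Fin 2 → ℤ) :
    Amat.mulVec w = ![-(w 0) + w 1, -(w 0) - w 1] := by
  funext i
  fin_cases i <;> simp [Amat, Matrix.mulVec, dotProduct, Fin.sum_univ_two] <;> ring

private lemma key : ∀ n : ℕ, ∀ z : Fin 2 → ℤ, (z 0) ^ 2 + (z 1) ^ 2 ≤ (n : ℤ) → z ∈ S := by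
  intro n
  induction n using Nat.strong_induction_on with
  | _ n ih =>
  intro z hz
  set x := z 0 with hx
  set y := z 1 with hy
  have hzxy : z = ![x, y] := by
    funext i; fin_cases i <;> rfl
  -- base cases
  by_cases h0 : x = 0 ∧ y = 0
  · have : z = 0 := by rw [hzxy, h0.1, h0.2]; funext i; fin_cases i <;> rfl
    rw [this]; exact zero_mem_S
  have hneg : (-![1, 0] : Fin 2 → ℤ) ∈ S := by
    have := step_S (d := -![1, 0]) (Or.inr (Or.inr rfl)) zero_mem_S
    simpa using this
  have hpos : (![1, 0] : Fin 2 → ℤ) ∈ S := by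
    have := step_S (d := ![1, 0]) (Or.inr (Or.inl rfl)) zero_mem_S
    simpa using this
  by_cases h01 : x = 0 ∧ y = 1
  · refine build (d := -![1, 0]) (Or.inr (Or.inr rfl)) hneg ?_
    rw [hzxy, h01.1, h01.2, mulVec_Amat]
    funext i; fin_cases i <;> simp
  by_cases h0m1 : x = 0 ∧ y = -1
  · refine build (d := ![1, 0]) (Or.inr (Or.inl rfl)) hpos ?_
    rw [hzxy, h0m1.1, h0m1.2, mulVec_Amat]
    funext i; fin_cases i <;> simp
  -- general step: choose digit d, set u = x - d 0 with u + y even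
  obtain ⟨d, hdmem, hdval, hpar, hdec⟩ :
      ∃ d : Fin 2 → ℤ, d ∈ Dig ∧ d 1 = 0 ∧ Even (x - d 0 + y) ∧
        (x - d 0) ^ 2 + y ^ 2 < 2 * (x ^ 2 + y ^ 2) := by
    have h1 : 1 ≤ x ^ 2 + y ^ 2 := by
      rcases (not_and_or.mp h0) with h | h
      · nlinarith [sq_nonneg y, Int.one_le_abs h, sq_abs x, abs_nonneg x]
      · nlinarith [sq_nonneg x, Int.one_le_abs h, sq_abs y, abs_nonneg y]
    by_cases hev : Even (x + y)
    · refine ⟨0, Or.inl rfl, rfl, ?_, ?_⟩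
      · simpa using hev
      · simp only [Pi.zero_apply, sub_zero]
        linarith
    · by_cases hx0 : 0 ≤ x
      · refine ⟨![1, 0], Or.inr (Or.inl rfl), rfl, ?_, ?_⟩
        · simp only [Matrix.cons_val_zero]
          rcases Int.even_or_odd (x + y) with h | h
          · exact absurd h hev
          · obtain ⟨k, hk⟩ := h; exact ⟨k, by linarith⟩
        · simp only [Matrix.cons_val_zero]
          rcases eq_or_lt_of_le hx0 with h | h
          · -- x = 0, y odd with y ∉ {0, 1, -1}, so y ^ 2 ≥ 4
            have hyne : y ≠ 1 := fun hy1 => h01 ⟨h.symm, hy1⟩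
            have hynem : y ≠ -1 := fun hy1 => h0m1 ⟨h.symm, hy1⟩
            have hyne0 : y ≠ 0 := by
              intro hy0
              exact hev (by simp [← h, hy0])
            have h2 : 2 ≤ |y| := by
              rcases abs_cases y with ⟨h1', h2'⟩ | ⟨h1', h2'⟩ <;> omega
            have h4 : 4 ≤ y ^ 2 := by nlinarith [sq_abs y]
            rw [← h]
            nlinarith
          · nlinarith [sq_nonneg x, sq_nonneg y]
      · refine ⟨-![1, 0], Or.inr (Or.inr rfl), by norm_num, ?_, ?_⟩
        · simp only [Pi.neg_apply, Matrix.cons_val_zero]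
          rcases Int.even_or_odd (x + y) with h | h
          · exact absurd h hev
          · obtain ⟨k, hk⟩ := h; exact ⟨k + 1, by linarith⟩
        · simp only [Pi.neg_apply, Matrix.cons_val_zero]
          push_neg at hx0
          nlinarith [sq_nonneg x, sq_nonneg y]
  -- construct w
  set u := x - d 0 with hu
  obtain ⟨k, hk⟩ := hpar
  set w : Fin 2 → ℤ := ![-k, k - y] with hw
  have hw0 : w 0 = -k := rfl
  have hw1 : w 1 = k - y := rfl
  have hwz : z = Amat.mulVec w + d := by
    rw [mulVec_Amat]
    funext i
    fin_cases i <;> simp <;> omega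
  -- measure decreases
  have hu2 : u = 2 * k - y := by omega
  have hid : 2 * ((-k) ^ 2 + (k - y) ^ 2) = u ^ 2 + y ^ 2 := by rw [hu2]; ring
  have hmeas : (w 0) ^ 2 + (w 1) ^ 2 < x ^ 2 + y ^ 2 := by
    rw [hw0, hw1]
    linarith
  have hn1 : 1 ≤ n := by
    have h0' : 0 ≤ (w 0) ^ 2 + (w 1) ^ 2 := by positivity
    have : (1 : ℤ) ≤ (n : ℤ) := by linarith
    exact_mod_cast this
  have hwS : w ∈ S := by
    refine ih (n - 1) (by omega) w ?_
    have hc : ((n - 1 : ℕ) : ℤ) = (n : ℤ) - 1 := by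
      push_cast [Nat.cast_sub hn1]; ring
    rw [hc]
    linarith
  exact build hdmem hwS hwz

/-- For the standard number system with `A = [[-1,1],[-1,-1]]` and
`D = {(0,0), (1,0)}` (so `D - D = {0, (1,0), (-1,0)}`), the set
`Δ = { ∑_{i=0}^ℓ A^i e_i : e_i ∈ D - D }` equals all of `ℤ²`: the difference set of
integer parts of the Heighway-dragon number system is the full lattice `ℤ²`. -/
theorem delta_eq_univ_heighway (A : Matrix (Fin 2) (Fin 2) ℤ)
    (hA : A = !![-1, 1; -1, -1])
    (Δ : Set (Fin 2 → ℤ))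
    (hΔ : Δ = {z | ∃ ℓ : ℕ, ∃ e : ℕ → (Fin 2 → ℤ),
      (∀ i, e i ∈ ({0, ![1, 0], -![1, 0]} : Set (Fin 2 → ℤ))) ∧
      z = ∑ i ∈ Finset.range (ℓ + 1), (A ^ i).mulVec (e i)}) :
    Δ = Set.univ := by
  subst hA hΔ
  ext z
  simp only [Set.mem_univ, iff_true, Set.mem_setOf_eq]
  have hz : z ∈ S := key ((z 0) ^ 2 + (z 1) ^ 2).toNat z (by
    rw [Int.toNat_of_nonneg (by positivity)])
  exact hz
end

section
/- Let A be an invertible m×m real matrix with |det A| = 2 such that A − I is invertible, and let d ∈ ℝ^m. Suppose K ⊂ ℝ^m is a compact set with Lebesgue measure 0 < vol(K) < ∞ satisfying K = A^{−1}(K) ∪ A^{−1}(K + d), where the two pieces A^{−1}(K) and A^{−1}(K + d) intersect in a set of Lebesgue measure zero. Then the center of mass of K equals (1/2)(A − I)^{−1} d; that is, ∫_K x dvol(x) = vol(K) · (1/2)(A − I)^{−1} d. -/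
open MeasureTheory

theorem aux_mulVec_integral (m : ℕ) (A : Matrix (Fin m) (Fin m) ℝ) (hdet : A.det ≠ 0)
    (S : Set (Fin m → ℝ)) (hS : MeasurableSet S)
    (hint : IntegrableOn (fun x => x) S volume) :
    (∫ x in A.mulVec '' S, x) = |A.det| • A.mulVec (∫ x in S, x) := by
  set L : (Fin m → ℝ) →L[ℝ] (Fin m → ℝ) := LinearMap.toContinuousLinearMap A.mulVecLin
  have hLdet : L.det = A.det := by
    show LinearMap.det (A.mulVecLin) = A.det
    rw [← Matrix.toLin'_apply' A, LinearMap.det_toLin']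
  have hinj : Set.InjOn A.mulVec S := by
    intro x _ y _ h
    have := congrArg (A⁻¹.mulVec) h
    simpa [Matrix.mulVec_mulVec, Matrix.nonsing_inv_mul A (isUnit_iff_ne_zero.mpr hdet),
      Matrix.one_mulVec] using this
  have himg : ⇑L '' S = A.mulVec '' S := rfl
  have := integral_image_eq_integral_abs_det_fderiv_smul volume hS
    (fun x _ => L.hasFDerivWithinAt) hinj (fun x => x)
  rw [himg] at this
  rw [this]
  simp only [hLdet]
  rw [integral_smul]
  congr 1
  exact L.integral_comp_comm hint

theorem aux_translate_integral (m : ℕ) (d : Fin m → ℝ)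
    (S : Set (Fin m → ℝ)) (hS : MeasurableSet S) (hfin : volume S < ⊤)
    (hint : IntegrableOn (fun x => x) S volume) :
    (∫ x in (fun y => y + d) '' S, x) = (∫ x in S, x) + (volume S).toReal • d := by
  have hinj : Set.InjOn (fun y => y + d) S :=
    fun x _ y _ h => by simpa using h
  have := integral_image_eq_integral_abs_det_fderiv_smul volume hS
    (fun x _ => ((hasFDerivAt_id x).add_const d).hasFDerivWithinAt) hinj
    (fun x => (x : Fin m → ℝ))
  simp only [id] at this
  rw [this]
  have hdet1 : (ContinuousLinearMap.id ℝ (Fin m → ℝ)).det = 1 := by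
    simp [ContinuousLinearMap.det]
  simp only [hdet1, abs_one, one_smul]
  rw [integral_add hint (integrableOn_const hfin.ne)]
  congr 1
  simp [setIntegral_const, Measure.real]

/-- Let `A` be an invertible `m × m` real matrix with `|det A| = 2` such that
`A - I` is invertible, and `d ∈ ℝ^m`. If `K ⊂ ℝ^m` is compact with `0 < vol K < ∞` and
`K = A⁻¹(K) ∪ A⁻¹(K + d)` with the two pieces overlapping in measure zero, then the center
of mass of `K` is `(1/2)(A - I)⁻¹ d`, i.e. `∫_K x dvol = vol K • (1/2)(A - I)⁻¹ d`. -/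
theorem center_of_mass_two_digit_tile (m : ℕ) (A : Matrix (Fin m) (Fin m) ℝ)
    (hdet : |A.det| = 2) (hAI : (A - 1).det ≠ 0) (d : Fin m → ℝ)
    (K : Set (Fin m → ℝ)) (hK : IsCompact K)
    (hpos : 0 < volume K) (hfin : volume K < ⊤)
    (hself : K = A⁻¹.mulVec '' K ∪ A⁻¹.mulVec '' ((fun y => y + d) '' K))
    (hover : volume (A⁻¹.mulVec '' K ∩ A⁻¹.mulVec '' ((fun y => y + d) '' K)) = 0) :
    (∫ x in K, x) = (volume K).toReal • ((1 / 2 : ℝ) • (A - 1)⁻¹.mulVec d) := by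
  have hAdet : A.det ≠ 0 := by
    intro h; rw [h] at hdet; norm_num at hdet
  have hBdet : A⁻¹.det ≠ 0 := by
    rw [Matrix.det_nonsing_inv, Ring.inverse_eq_inv]
    exact inv_ne_zero hAdet
  have hBabs : |A⁻¹.det| = 1 / 2 := by
    rw [Matrix.det_nonsing_inv, Ring.inverse_eq_inv, abs_inv, hdet]
    norm_num
  -- continuity of the affine maps
  have hcontB : Continuous (A⁻¹.mulVec) :=
    (LinearMap.toContinuousLinearMap (A⁻¹.mulVecLin)).continuous
  have hconttr : Continuous (fun y : Fin m → ℝ => y + d) :=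
    continuous_id.add continuous_const
  -- compactness of the pieces
  have hKtr : IsCompact ((fun y => y + d) '' K) := hK.image hconttr
  have hK1 : IsCompact (A⁻¹.mulVec '' K) := hK.image hcontB
  have hK2 : IsCompact (A⁻¹.mulVec '' ((fun y => y + d) '' K)) := hKtr.image hcontB
  -- integrability of the identity on compact sets
  have hintK : IntegrableOn (fun x : Fin m → ℝ => x) K volume :=
    continuous_id.continuousOn.integrableOn_compact hK
  have hintKtr : IntegrableOn (fun x : Fin m → ℝ => x) ((fun y => y + d) '' K) volume :=
    continuous_id.continuousOn.integrableOn_compact hKtr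
  have hint1 : IntegrableOn (fun x : Fin m → ℝ => x) (A⁻¹.mulVec '' K) volume :=
    continuous_id.continuousOn.integrableOn_compact hK1
  have hint2 : IntegrableOn (fun x : Fin m → ℝ => x)
      (A⁻¹.mulVec '' ((fun y => y + d) '' K)) volume :=
    continuous_id.continuousOn.integrableOn_compact hK2
  set c : Fin m → ℝ := ∫ x in K, x with hc
  set v : ℝ := (volume K).toReal with hv
  -- translation invariance: volume of K + d equals volume of K
  have hvolKtr : volume ((fun y => y + d) '' K) = volume K := by
    have : (fun y : Fin m → ℝ => y + d) '' K = (fun y : Fin m → ℝ => d + y) '' K := by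
      simp [add_comm]
    rw [this, Set.image_add_left]
    exact measure_preimage_add volume (-d) K
  -- split the integral over the union
  have hsplit : c = (∫ x in A⁻¹.mulVec '' K, x)
      + ∫ x in A⁻¹.mulVec '' ((fun y => y + d) '' K), x := by
    rw [hc]
    conv_lhs => rw [hself]
    exact integral_union_ae hover hK2.measurableSet.nullMeasurableSet hint1 hint2
  have h1 : (∫ x in A⁻¹.mulVec '' K, x) = (1 / 2 : ℝ) • A⁻¹.mulVec c := by
    rw [aux_mulVec_integral m A⁻¹ hBdet K hK.measurableSet hintK, hBabs]
  have h2 : (∫ x in A⁻¹.mulVec '' ((fun y => y + d) '' K), x)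
      = (1 / 2 : ℝ) • A⁻¹.mulVec (c + v • d) := by
    rw [aux_mulVec_integral m A⁻¹ hBdet _ hKtr.measurableSet hintKtr, hBabs,
      aux_translate_integral m d K hK.measurableSet hfin hintK]
  have hcancel : ∀ x : Fin m → ℝ, A.mulVec (A⁻¹.mulVec x) = x := by
    intro x
    rw [Matrix.mulVec_mulVec, Matrix.mul_nonsing_inv A (isUnit_iff_ne_zero.mpr hAdet), Matrix.one_mulVec]
  -- derive (A - 1) c = (v/2) d
  have hkey : (A - 1).mulVec c = ((1 / 2 : ℝ) * v) • d := by
    have hAc : A.mulVec c = c + ((1 / 2 : ℝ) * v) • d := by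
      have := congrArg (A.mulVec) (hsplit.trans (by rw [h1, h2]))
      rw [Matrix.mulVec_add, Matrix.mulVec_smul, Matrix.mulVec_smul, hcancel, hcancel] at this
      rw [this]
      module
    rw [Matrix.sub_mulVec, Matrix.one_mulVec, hAc]
    abel
  have := congrArg ((A - 1)⁻¹.mulVec) hkey
  rw [Matrix.mulVec_mulVec, Matrix.nonsing_inv_mul (A - 1) (isUnit_iff_ne_zero.mpr hAI), Matrix.one_mulVec,
    Matrix.mulVec_smul] at this
  rw [this, smul_smul, mul_comm]
end
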